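/- arXiv:1707.04074 — 3 statements merged into one kernel-verified Lean document; each statement's English description precedes it below -/
import Mathlib

section
/- In a bicategory B, suppose η : 𝟙 x ⟶ f ≫ u exhibits u as a left Kan extension of 𝟙 x along f, and this Kan extension is preserved by f (the pasting of η with f exhibits u ≫ f as a left Kan extension of f along f). Then there exist a counit ε : u ≫ f ⟶ 𝟙 a and the data of an adjunction f ⊣ u with unit η. -/
open CategoryTheory Bicategory
open scoped Bicategory

/-!
The two hypotheses say that `η` and its whiskering `η ▷ f` are left Kan extensions. The counit
`ε : u ≫ f ⟶ 𝟙 a` is the factorization of `f ≅ f ≫ 𝟙 a` through `η ▷ f`, which is the left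
triangle identity; the right one follows because both of its sides become equal after pasting
with `η`, and `η` is Kan. This is `LeftExtension.IsKan.adjunction`.
-/

namespace CategoryTheory.Bicategory.LeftExtension

variable {B : Type*} [Bicategory B] {a b c : B} {f : a ⟶ b} {g : a ⟶ c}

noncomputable def IsKan.ofExistsUnique (t : LeftExtension f g)
    (h : ∀ (k : b ⟶ c) (θ : g ⟶ f ≫ k), ∃! θ' : t.extension ⟶ k, t.unit ≫ f ◁ θ' = θ) :
    t.IsKan :=
  .mk (fun s => homMk (h s.extension s.unit).choose (h s.extension s.unit).choose_spec.1)
    (fun s τ => by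
      ext
      exact (h s.extension s.unit).choose_spec.2 τ.right (w τ))

end CategoryTheory.Bicategory.LeftExtension

theorem stmt7 {B : Type*} [Bicategory B] {x a : B} (f : x ⟶ a) (u : a ⟶ x)
    (η : 𝟙 x ⟶ f ≫ u)
    (hext : ∀ (k : a ⟶ x) (θ : 𝟙 x ⟶ f ≫ k), ∃! θ' : u ⟶ k, η ≫ f ◁ θ' = θ)
    (hpres : ∀ (k : a ⟶ a) (θ : f ⟶ f ≫ k),
      ∃! θ' : u ≫ f ⟶ k,
        (λ_ f).inv ≫ η ▷ f ≫ (α_ f u f).hom ≫ f ◁ θ' = θ) :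
    ∃ adj : Bicategory.Adjunction f u, adj.unit = η := by
  let t : LeftExtension f (𝟙 x) := .mk u η
  have hKan : t.IsKan := .ofExistsUnique t hext
  have hKanWhisker : (t.whisker f).IsKan := .ofExistsUnique _ fun k θ =>
    show ∃! θ' : u ≫ f ⟶ k, (η ▷ f ≫ (α_ f u f).hom) ≫ f ◁ θ' = θ by
      simpa only [Category.assoc, cancel_epi] using hpres k ((λ_ f).inv ≫ θ)
  exact ⟨hKan.adjunction hKanWhisker, rfl⟩
end

section
/- Let F : X ⥤ A and U : A ⥤ X, and suppose η : 𝟭 X ⟶ F ⋙ U exhibits U as a left Kan extension of 𝟭 X along F preserved by F, with ε : U ⋙ F ⟶ 𝟭 A the induced counit. Then the second triangle identity holds: for every a : A, U.map (ε.app a) ∘ η.app (U.obj a) = 𝟙 (U.obj a). -/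
/-!
The endomorphism `σ = Uε ∘ ηU` of `U` satisfies `Fσ ∘ η = η`: by naturality of `η`,
`ηU ∘ η = UFη ∘ η`, and then the first triangle identity `εF ∘ Fη = 1` collapses
`Uε ∘ UFη` at the objects `F x`. So `σ` and `𝟙 U` both factor `η` through itself, and the
uniqueness of factorizations through the Kan extension `η` forces `σ = 𝟙 U`.
-/

open CategoryTheory

universe v₁ v₂ v₃ u₁ u₂ u₃

/-- `η : H ⟶ F ⋙ L` exhibits `L` as a left Kan extension of `H` along `F`. -/
def IsLeftKanExt {X : Type u₁} {A : Type u₂} {B : Type u₃}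
    [Category.{v₁} X] [Category.{v₂} A] [Category.{v₃} B]
    (F : X ⥤ A) (H : X ⥤ B) (L : A ⥤ B) (η : H ⟶ F ⋙ L) : Prop :=
  ∀ (K : A ⥤ B) (f : H ⟶ F ⋙ K), ∃! fs : L ⟶ K, η ≫ CategoryTheory.Functor.whiskerLeft F fs = f

namespace IsLeftKanExt

variable {X : Type u₁} {A : Type u₂} {B : Type u₃}
  [Category.{v₁} X] [Category.{v₂} A] [Category.{v₃} B]
  {F : X ⥤ A} {H : X ⥤ B} {L : A ⥤ B} {η : H ⟶ F ⋙ L}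

theorem hom_ext (h : IsLeftKanExt F H L η) {K : A ⥤ B} {α β : L ⟶ K}
    (hαβ : η ≫ Functor.whiskerLeft F α = η ≫ Functor.whiskerLeft F β) : α = β :=
  (h K _).unique rfl hαβ.symm

theorem eq_id_of_comp_whiskerLeft_eq (h : IsLeftKanExt F H L η) {σ : L ⟶ L}
    (hσ : η ≫ Functor.whiskerLeft F σ = η) : σ = 𝟙 L :=
  h.hom_ext (by rw [hσ, Functor.whiskerLeft_id', Category.comp_id])

end IsLeftKanExt

theorem comp_whiskerLeft_unit_counit {X : Type u₁} {A : Type u₂}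
    [Category.{v₁} X] [Category.{v₂} A] (F : X ⥤ A) (U : A ⥤ X)
    (η : 𝟭 X ⟶ F ⋙ U) (ε : U ⋙ F ⟶ 𝟭 A)
    (hε : ∀ x : X, F.map (η.app x) ≫ ε.app (F.obj x) = 𝟙 (F.obj x)) :
    η ≫ Functor.whiskerLeft F
      (Functor.whiskerLeft U η ≫ Functor.whiskerRight ε U : U ⟶ U) = η := by
  ext x
  have hnat : η.app x ≫ η.app (U.obj (F.obj x)) = η.app x ≫ U.map (F.map (η.app x)) :=
    η.naturality (η.app x)
  simp only [NatTrans.comp_app, Functor.whiskerLeft_app, Functor.whiskerRight_app]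
  rw [reassoc_of% hnat, ← U.map_comp, hε, U.map_id, Category.comp_id]

theorem stmt11_general {X : Type u₁} {A : Type u₂} [Category.{v₁} X] [Category.{v₂} A]
    (F : X ⥤ A) (U : A ⥤ X) (η : 𝟭 X ⟶ F ⋙ U)
    (hext : IsLeftKanExt F (𝟭 X) U η)
    (ε : U ⋙ F ⟶ 𝟭 A)
    (hε : ∀ x : X, F.map (η.app x) ≫ ε.app (F.obj x) = 𝟙 (F.obj x)) :
    ∀ a : A, η.app (U.obj a) ≫ U.map (ε.app a) = 𝟙 (U.obj a) := fun a =>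
  congrArg (NatTrans.app · a)
    (hext.eq_id_of_comp_whiskerLeft_eq (comp_whiskerLeft_unit_counit F U η ε hε))

theorem stmt11 {X : Type u₁} {A : Type u₂} [Category.{v₁} X] [Category.{v₂} A]
    (F : X ⥤ A) (U : A ⥤ X) (η : 𝟭 X ⟶ F ⋙ U)
    (hext : IsLeftKanExt F (𝟭 X) U η)
    (hpres : IsLeftKanExt F F (U ⋙ F) (CategoryTheory.Functor.whiskerRight η F))
    (ε : U ⋙ F ⟶ 𝟭 A)
    (hε : ∀ x : X, F.map (η.app x) ≫ ε.app (F.obj x) = 𝟙 (F.obj x)) :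
    ∀ a : A, η.app (U.obj a) ≫ U.map (ε.app a) = 𝟙 (U.obj a) :=
  stmt11_general F U η hext ε hε
end

section
/- Let F : X ⥤ A, U : A ⥤ X and suppose η : 𝟭 X ⟶ F ⋙ U exhibits F as a left lifting of 𝟭 X through U, and this lifting is preserved by U, i.e., the 2-cell with components η.app (U.obj a) : U.obj a ⟶ U.obj (F.obj (U.obj a)) exhibits U ⋙ F as a left lifting of U through U. Then there is an adjunction F ⊣ U with unit η. -/
open CategoryTheory

universe v₁ v₂ v₃ u₁ u₂ u₃

/-- `lam : H ⟶ L ⋙ U` exhibits `L` as a left lifting of `H` through `U`. -/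
def IsLeftLift {X : Type u₁} {A : Type u₂} {B : Type u₃}
    [Category.{v₁} X] [Category.{v₂} A] [Category.{v₃} B]
    (U : A ⥤ X) (H : B ⥤ X) (L : B ⥤ A) (lam : H ⟶ L ⋙ U) : Prop :=
  ∀ (K : B ⥤ A) (f : H ⟶ K ⋙ U),
    ∃! fb : L ⟶ K, lam ≫ CategoryTheory.Functor.whiskerRight fb U = f

theorem stmt17 {X : Type u₁} {A : Type u₂} [Category.{v₁} X] [Category.{v₂} A]
    (F : X ⥤ A) (U : A ⥤ X) (η : 𝟭 X ⟶ F ⋙ U)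
    (hlift : IsLeftLift U (𝟭 X) F η)
    (hpres : IsLeftLift U U (U ⋙ F) (CategoryTheory.Functor.whiskerLeft U η)) :
    ∃ adj : F ⊣ U, adj.unit = η := by
  obtain ⟨ε, hε, -⟩ := hpres (𝟭 A) (𝟙 U)
  -- hε : whiskerLeft U η ≫ whiskerRight ε U = 𝟙 U
  have hε' : ∀ a : A, η.app (U.obj a) ≫ U.map (ε.app a) = 𝟙 (U.obj a) := by
    intro a
    have := congrArg (fun t => t.app a) hε
    simpa using this
  -- second triangle via uniqueness of the lift of η
  have hθ : ∀ x : X, F.map (η.app x) ≫ ε.app (F.obj x) = 𝟙 (F.obj x) := by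
    set θ : F ⟶ F := Functor.whiskerRight η F ≫ Functor.whiskerLeft F ε with hθdef
    obtain ⟨g, hg, hu⟩ := hlift F η
    have h1 : η ≫ Functor.whiskerRight θ U = η := by
      ext x
      have nat := η.naturality (η.app x)
      simp only [hθdef, NatTrans.comp_app, Functor.whiskerRight_app, Functor.whiskerLeft_app,
        Functor.map_comp, NatTrans.id_app, Functor.id_map] at *
      have nat' : η.app x ≫ U.map (F.map (η.app x)) =
          η.app x ≫ η.app (U.obj (F.obj x)) := by simpa using nat.symm
      rw [← Category.assoc, nat', Category.assoc, hε' (F.obj x)]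
      simp
    have h2 : η ≫ Functor.whiskerRight (𝟙 F) U = η := by simp
    have := (hu θ h1).trans (hu (𝟙 F) h2).symm
    intro x
    have := congrArg (fun t => t.app x) this
    simpa [hθdef] using this
  refine ⟨Adjunction.mkOfUnitCounit ⟨η, ε, ?_, ?_⟩, rfl⟩
  · ext x
    simpa using hθ x
  · ext a
    simpa using hε' a
end
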